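/- For all integers d ≥ 2 and n ≥ 0, let d_R := max_{λ ∈ R_{n,d}} d_λ and d_tot := Σ_{λ ∈ R_{n,d}} d_λ. Then ⌈log₂ d_tot⌉ − ⌈log₂ d_R⌉ ≤ (d − 1) · log₂(n+1) + 1, where the logarithms are real-valued and ⌈·⌉ is the ceiling function. -/

import Mathlib

/-- The set of Young diagrams with at most `d` rows and `n` boxes. -/
def youngSet (n d : ℕ) : Set (Fin d → ℕ) := {l | Antitone l ∧ ∑ i, l i = n}

/-- The Weyl dimension formula (as a real number) for the `SU(d)` irreducible
representation with Young diagram `l`. -/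
noncomputable def weylDim (d : ℕ) (l : Fin d → ℕ) : ℝ :=
  (∏ i : Fin d, ∏ j ∈ Finset.Ioi i, (((l i : ℝ) - (l j : ℝ)) + ((j : ℕ) : ℝ) - ((i : ℕ) : ℝ))) /
    (∏ k ∈ Finset.range d, (Nat.factorial k : ℝ))

/-!
`d_tot` is a sum of `|R_{n,d}|` terms, each at most `d_R`. A diagram is determined by its last
`d - 1` rows (the first is `n` minus their sum), each of length at most `n`, so
`|R_{n,d}| ≤ (n+1)^(d-1)`. Hence `log₂ d_tot ≤ (d-1) log₂ (n+1) + log₂ d_R`, and rounding up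
costs at most one.
-/

open Real Finset

lemma le_of_mem_youngSet {n d : ℕ} {l : Fin d → ℕ} (hl : l ∈ youngSet n d) (i : Fin d) :
    l i ≤ n :=
  hl.2 ▸ single_le_sum (fun j _ => Nat.zero_le (l j)) (mem_univ i)

lemma youngSet_subset_Iic (n d : ℕ) : youngSet n d ⊆ Set.Iic (fun _ => n) :=
  fun _ hl i => le_of_mem_youngSet hl i

lemma youngSet_finite (n d : ℕ) : (youngSet n d).Finite :=
  (Set.finite_Iic _).subset (youngSet_subset_Iic n d)

lemma youngSet_nonempty (n d : ℕ) : (youngSet n (d + 1)).Nonempty := by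
  refine ⟨fun i => if i = 0 then n else 0, fun i j hij => ?_, by simp⟩
  by_cases hj : j = 0
  · simp [hj, Fin.le_zero_iff.mp (hj ▸ hij)]
  · simp [hj]

lemma injOn_tail_youngSet (n d : ℕ) : Set.InjOn Fin.tail (youngSet n (d + 1)) := by
  intro l hl m hm htail
  have hsum : ∑ i, Fin.tail l i = ∑ i, Fin.tail m i := by rw [htail]
  have hl_sum := hl.2
  have hm_sum := hm.2
  rw [Fin.sum_univ_succ] at hl_sum hm_sum
  have hhead : l 0 = m 0 := by simp only [Fin.tail] at hsum; omega
  rw [← Fin.cons_self_tail l, ← Fin.cons_self_tail m, hhead, htail]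

lemma ncard_youngSet_le (n d : ℕ) : (youngSet n (d + 1)).ncard ≤ (n + 1) ^ d := by
  calc (youngSet n (d + 1)).ncard
      ≤ (↑(Iic (fun _ : Fin d => n)) : Set (Fin d → ℕ)).ncard :=
        Set.ncard_le_ncard_of_injOn Fin.tail
          (fun l hl => mem_coe.mpr (mem_Iic.mpr fun i => le_of_mem_youngSet hl i.succ))
          (injOn_tail_youngSet n d) (finite_toSet _)
    _ = (n + 1) ^ d := by rw [Set.ncard_coe_finset, Pi.card_Iic]; simp

lemma weylDim_pos {n d : ℕ} {l : Fin d → ℕ} (hl : l ∈ youngSet n d) : 0 < weylDim d l := by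
  refine div_pos (prod_pos fun i _ => prod_pos fun j hj => ?_)
    (prod_pos fun k _ => by exact_mod_cast k.factorial_pos)
  have hij : i < j := mem_Ioi.mp hj
  have hrows : (l j : ℝ) ≤ l i := by exact_mod_cast hl.1 hij.le
  have hidx : ((i : ℕ) : ℝ) < (j : ℕ) := by exact_mod_cast hij
  linarith

lemma ceil_logb_sub_ceil_logb_le {b x y c : ℝ} (hb : 1 < b) (hx : 0 < x) (hy : 0 < y)
    (hxy : x ≤ c * y) : (⌈logb b x⌉ : ℝ) - ⌈logb b y⌉ ≤ logb b c + 1 := by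
  have hc : 0 < c := pos_of_mul_pos_left (hx.trans_le hxy) hy.le
  have hlog : logb b x ≤ logb b c + logb b y := by
    rw [← logb_mul hc.ne' hy.ne']
    exact logb_le_logb_of_le hb hx hxy
  linarith [Int.ceil_lt_add_one (logb b x), Int.le_ceil (logb b y)]

/-- Eqs. (38)-(40) of the paper: the communication cost saving
`Δc = ⌈log₂ d_tot⌉ - ⌈log₂ d_R⌉` of the representation matching protocol
satisfies `Δc ≤ (d-1)·log₂(n+1) + 1`. -/
theorem cost_saving_le (d n : ℕ) (hd : 2 ≤ d) :
    (⌈Real.logb 2 (∑ᶠ l ∈ youngSet n d, weylDim d l)⌉ : ℝ)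
        - (⌈Real.logb 2 (sSup (weylDim d '' youngSet n d))⌉ : ℝ)
      ≤ ((d : ℝ) - 1) * Real.logb 2 ((n : ℝ) + 1) + 1 := by
  obtain ⟨d, rfl⟩ : ∃ d', d = d' + 1 := ⟨d - 1, by omega⟩
  have hfin := youngSet_finite n (d + 1)
  set Y := hfin.toFinset
  have hY : Y.Nonempty := hfin.toFinset_nonempty.mpr (youngSet_nonempty n d)
  obtain ⟨l₀, hl₀, hmax⟩ := Y.exists_max_image (weylDim (d + 1)) hY
  rw [Set.Finite.mem_toFinset] at hl₀
  have hsSup : sSup (weylDim (d + 1) '' youngSet n (d + 1)) = weylDim (d + 1) l₀ :=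
    IsGreatest.csSup_eq ⟨⟨l₀, hl₀, rfl⟩, by
      rintro _ ⟨l, hl, rfl⟩; exact hmax l (hfin.mem_toFinset.mpr hl)⟩
  have hcard : (Y.card : ℝ) ≤ ((n : ℝ) + 1) ^ d := by
    rw [← Set.ncard_eq_toFinset_card _ hfin]
    exact_mod_cast ncard_youngSet_le n d
  have hsum : ∑ l ∈ Y, weylDim (d + 1) l ≤ ((n : ℝ) + 1) ^ d * weylDim (d + 1) l₀ := by
    grw [sum_le_card_nsmul Y _ _ hmax, nsmul_eq_mul, hcard]
    exact (weylDim_pos hl₀).le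
  rw [finsum_mem_eq_finite_toFinset_sum _ hfin, hsSup]
  calc _ ≤ logb 2 (((n : ℝ) + 1) ^ d) + 1 :=
        ceil_logb_sub_ceil_logb_le one_lt_two
          (sum_pos (fun l hl => weylDim_pos (hfin.mem_toFinset.mp hl)) hY)
          (weylDim_pos hl₀) hsum
    _ = _ := by rw [logb_pow]; push_cast; ring
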